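/- Let F : ℝⁿ → ℝᵐ be continuously differentiable with Jacobian J(x), L a real p×n matrix, and γ > 0 satisfy the completeness condition ‖J(x)v‖² + ‖Lv‖² ≥ γ‖v‖² for all v ∈ ℝⁿ and all x ∈ ℝⁿ. Fix ν, η, ϑ ∈ (0, 1), and let {x_k} be generated by the LMMSS line-search algorithm: F(x_k) ≠ 0 for all k; d_k solves (J(x_k)ᵀJ(x_k) + λ_k LᵀL)d_k = −J(x_k)ᵀF(x_k) with λ_k = ‖F(x_k)‖²; the step size is α_k = 1 if ‖F(x_k + d_k)‖ ≤ ϑ‖F(x_k)‖, and otherwise α_k = η^{m_k} where m_k is the smallest non-negative integer m satisfying the Armijo condition φ(x_k + η^m d_k) − φ(x_k) ≤ ν η^m ∇φ(x_k)ᵀd_k, with φ(x) = ½‖F(x)‖²; and x_{k+1} = x_k + α_k d_k. Then every limit point x̂ of {x_k} satisfies ∇φ(x̂) = J(x̂)ᵀF(x̂) = 0. -/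

import Mathlib

open Matrix Filter RealInnerProductSpace

/-- The continuous linear map on Euclidean spaces induced by a real matrix. -/
noncomputable def matCLM {m n : ℕ} (A : Matrix (Fin m) (Fin n) ℝ) :
    EuclideanSpace ℝ (Fin n) →L[ℝ] EuclideanSpace ℝ (Fin m) :=
  LinearMap.toContinuousLinearMap (Matrix.toEuclideanLin A)


lemma matCLM_apply' {m n : ℕ} (A : Matrix (Fin m) (Fin n) ℝ) (v : EuclideanSpace ℝ (Fin n)) :
    matCLM A v = Matrix.toEuclideanLin A v := rfl

lemma matCLM_mul {m n p : ℕ} (A : Matrix (Fin m) (Fin n) ℝ) (B : Matrix (Fin n) (Fin p) ℝ)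
    (v : EuclideanSpace ℝ (Fin p)) : matCLM (A * B) v = matCLM A (matCLM B v) := by
  simp [matCLM_apply', Matrix.toEuclideanLin_apply, Matrix.mulVec_mulVec]

lemma matCLM_add {m n : ℕ} (A B : Matrix (Fin m) (Fin n) ℝ) (v : EuclideanSpace ℝ (Fin n)) :
    matCLM (A + B) v = matCLM A v + matCLM B v := by
  simp [matCLM_apply', map_add]

lemma matCLM_smul {m n : ℕ} (c : ℝ) (A : Matrix (Fin m) (Fin n) ℝ) (v : EuclideanSpace ℝ (Fin n)) :
    matCLM (c • A) v = c • matCLM A v := by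
  simp [matCLM_apply', _root_.map_smul]

lemma inner_matCLM_transpose {m n : ℕ} (A : Matrix (Fin m) (Fin n) ℝ)
    (u : EuclideanSpace ℝ (Fin m)) (v : EuclideanSpace ℝ (Fin n)) :
    ⟪matCLM Aᵀ u, v⟫ = ⟪u, matCLM A v⟫ := by
  rw [matCLM_apply', ← Matrix.conjTranspose_eq_transpose_of_trivial,
    Matrix.toEuclideanLin_conjTranspose_eq_adjoint, matCLM_apply']
  exact LinearMap.adjoint_inner_left _ _ _

lemma continuous_matCLM {m n : ℕ} :
    Continuous (fun A : Matrix (Fin m) (Fin n) ℝ => matCLM A) := by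
  let L : Matrix (Fin m) (Fin n) ℝ →ₗ[ℝ]
      (EuclideanSpace ℝ (Fin n) →L[ℝ] EuclideanSpace ℝ (Fin m)) :=
    { toFun := matCLM
      map_add' := fun A B => by ext v; simp [matCLM_add]
      map_smul' := fun c A => by ext v; simp [matCLM_smul] }
  exact L.continuous_of_finiteDimensional

lemma phi_hasDerivAt {m n : ℕ} {F : EuclideanSpace ℝ (Fin n) → EuclideanSpace ℝ (Fin m)}
    {J : EuclideanSpace ℝ (Fin n) → Matrix (Fin m) (Fin n) ℝ}
    (hdiff : ∀ x, HasFDerivAt F (matCLM (J x)) x)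
    (x d : EuclideanSpace ℝ (Fin n)) (t : ℝ) :
    HasDerivAt (fun s : ℝ => (1 : ℝ) / 2 * ‖F (x + s • d)‖ ^ 2)
      ⟪matCLM (J (x + t • d))ᵀ (F (x + t • d)), d⟫ t := by
  set y := x + t • d with hy
  have hline : HasDerivAt (fun s : ℝ => x + s • d) d t := by
    simpa using ((hasDerivAt_id t).smul_const d).const_add x
  have hFc : HasDerivAt (fun s : ℝ => F (x + s • d)) (matCLM (J y) d) t :=
    (hdiff y).comp_hasDerivAt t hline
  have h2 : HasDerivAt (fun s : ℝ => ⟪F (x + s • d), F (x + s • d)⟫)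
      (⟪F y, matCLM (J y) d⟫ + ⟪matCLM (J y) d, F y⟫) t := hFc.inner ℝ hFc
  have h3 : HasDerivAt (fun s : ℝ => (1 : ℝ) / 2 * ⟪F (x + s • d), F (x + s • d)⟫)
      ((1 : ℝ) / 2 * (⟪F y, matCLM (J y) d⟫ + ⟪matCLM (J y) d, F y⟫)) t :=
    h2.const_mul _
  have hfun : (fun s : ℝ => (1 : ℝ) / 2 * ‖F (x + s • d)‖ ^ 2)
      = fun s : ℝ => (1 : ℝ) / 2 * ⟪F (x + s • d), F (x + s • d)⟫ := by
    funext s; rw [real_inner_self_eq_norm_sq]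
  have hval : ⟪matCLM (J y)ᵀ (F y), d⟫
      = (1 : ℝ) / 2 * (⟪F y, matCLM (J y) d⟫ + ⟪matCLM (J y) d, F y⟫) := by
    rw [inner_matCLM_transpose, real_inner_comm (matCLM (J y) d)]; ring
  rw [hfun, hval]
  exact h3

set_option maxHeartbeats 2000000 in
/-- every limit point `x̂` of the sequence generated by the LMMSS line-search
algorithm (full step if `‖F(x_k + d_k)‖ ≤ ϑ‖F(x_k)‖`, otherwise Armijo backtracking with
parameters `ν, η`) is a stationary point of `φ(x) = ½‖F(x)‖²`, i.e. `J(x̂)ᵀF(x̂) = 0`. -/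
theorem lmmss_linesearch_global_convergence
    (n m p : ℕ)
    (F : EuclideanSpace ℝ (Fin n) → EuclideanSpace ℝ (Fin m))
    (J : EuclideanSpace ℝ (Fin n) → Matrix (Fin m) (Fin n) ℝ)
    (hdiff : ∀ x, HasFDerivAt F (matCLM (J x)) x)
    (hJcont : Continuous J)
    (L : Matrix (Fin p) (Fin n) ℝ) (γ : ℝ) (hγ : 0 < γ)
    (hcomp : ∀ (x : EuclideanSpace ℝ (Fin n)) (v : EuclideanSpace ℝ (Fin n)),
      ‖matCLM (J x) v‖ ^ 2 + ‖matCLM L v‖ ^ 2 ≥ γ * ‖v‖ ^ 2)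
    (ν η ϑ : ℝ) (hν : ν ∈ Set.Ioo (0 : ℝ) 1) (hη : η ∈ Set.Ioo (0 : ℝ) 1)
    (hϑ : ϑ ∈ Set.Ioo (0 : ℝ) 1)
    (x d : ℕ → EuclideanSpace ℝ (Fin n)) (α : ℕ → ℝ)
    (hFk : ∀ k, F (x k) ≠ 0)
    (hd : ∀ k,
      matCLM ((J (x k))ᵀ * J (x k) + ‖F (x k)‖ ^ 2 • (Lᵀ * L)) (d k) =
        -(matCLM (J (x k))ᵀ (F (x k))))
    (hα : ∀ k,
      (‖F (x k + d k)‖ ≤ ϑ * ‖F (x k)‖ ∧ α k = 1) ∨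
      (¬ (‖F (x k + d k)‖ ≤ ϑ * ‖F (x k)‖) ∧ ∃ mk : ℕ, α k = η ^ mk ∧
        ((1 : ℝ) / 2) * ‖F (x k + η ^ mk • d k)‖ ^ 2 - ((1 : ℝ) / 2) * ‖F (x k)‖ ^ 2 ≤
          ν * η ^ mk * ⟪matCLM (J (x k))ᵀ (F (x k)), d k⟫ ∧
        ∀ m' : ℕ, m' < mk →
          ¬ (((1 : ℝ) / 2) * ‖F (x k + η ^ m' • d k)‖ ^ 2 - ((1 : ℝ) / 2) * ‖F (x k)‖ ^ 2 ≤
            ν * η ^ m' * ⟪matCLM (J (x k))ᵀ (F (x k)), d k⟫)))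
    (hstep : ∀ k, x (k + 1) = x k + α k • d k) :
    ∀ xhat : EuclideanSpace ℝ (Fin n),
      (∃ K : ℕ → ℕ, StrictMono K ∧ Tendsto (fun k => x (K k)) atTop (nhds xhat)) →
      matCLM (J xhat)ᵀ (F xhat) = 0 := by
  obtain ⟨hν0, hν1⟩ := hν
  obtain ⟨hη0, hη1⟩ := hη
  obtain ⟨hϑ0, hϑ1⟩ := hϑ
  -- notation
  set g : EuclideanSpace ℝ (Fin n) → EuclideanSpace ℝ (Fin n) :=
    fun y => matCLM (J y)ᵀ (F y) with hg_def
  set φ : EuclideanSpace ℝ (Fin n) → ℝ := fun y => (1 : ℝ) / 2 * ‖F y‖ ^ 2 with hφ_def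
  set q : ℕ → ℝ := fun k =>
    ‖matCLM (J (x k)) (d k)‖ ^ 2 + ‖F (x k)‖ ^ 2 * ‖matCLM L (d k)‖ ^ 2 with hq_def
  have hFcont : Continuous F := continuous_iff_continuousAt.2 fun y => (hdiff y).continuousAt
  have hgcont : Continuous g :=
    (continuous_matCLM.comp hJcont.matrix_transpose).clm_apply hFcont
  -- descent identity
  have hdesc : ∀ k, ⟪g (x k), d k⟫ = -(q k) := by
    intro k
    have h1 : g (x k) = -(matCLM ((J (x k))ᵀ * J (x k) + ‖F (x k)‖ ^ 2 • (Lᵀ * L)) (d k)) := by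
      rw [hd k, neg_neg, hg_def]
    rw [h1, inner_neg_left, matCLM_add, inner_add_left, matCLM_mul, inner_matCLM_transpose,
      matCLM_smul, inner_smul_left, matCLM_mul, inner_matCLM_transpose,
      real_inner_self_eq_norm_sq, real_inner_self_eq_norm_sq]
    simp [hq_def]
  have hqnonneg : ∀ k, 0 ≤ q k := by
    intro k; have := sq_nonneg ‖F (x k)‖; positivity
  -- φ decreases
  have hdec : ∀ k, φ (x (k + 1)) ≤ φ (x k) := by
    intro k
    rcases hα k with ⟨hc, hα1⟩ | ⟨hnc, mk, hαk, harm, _⟩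
    · have hx1 : x (k + 1) = x k + d k := by rw [hstep k, hα1, one_smul]
      have h2 : ‖F (x (k + 1))‖ ≤ ϑ * ‖F (x k)‖ := by rw [hx1]; exact hc
      have h3 : (0 : ℝ) ≤ ‖F (x k)‖ := norm_nonneg _
      have h4 : ‖F (x (k + 1))‖ ≤ ‖F (x k)‖ :=
        h2.trans (by nlinarith)
      simp only [hφ_def]
      nlinarith [norm_nonneg (F (x (k + 1)))]
    · have hx1 : x (k + 1) = x k + η ^ mk • d k := by rw [hstep k, hαk]
      have h2 : φ (x (k + 1)) - φ (x k) ≤ ν * η ^ mk * ⟪g (x k), d k⟫ := by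
        rw [hx1]; exact harm
      have h3 : ⟪g (x k), d k⟫ ≤ 0 := by rw [hdesc k]; linarith [hqnonneg k]
      have h5 : ν * η ^ mk * ⟪g (x k), d k⟫ ≤ 0 :=
        mul_nonpos_of_nonneg_of_nonpos (by positivity) h3
      linarith
  have hφanti : Antitone fun k => φ (x k) := antitone_nat_of_succ_le hdec
  have hFanti : Antitone fun k => ‖F (x k)‖ := by
    apply antitone_nat_of_succ_le
    intro k
    have := hdec k
    simp only [hφ_def] at this
    nlinarith [norm_nonneg (F (x (k + 1))), norm_nonneg (F (x k))]
  intro xhat ⟨K, hK, hKlim⟩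
  by_cases hF0 : F xhat = 0
  · simp [hF0]
  by_contra hg
  -- r̂ > 0, limits
  set r : ℝ := ‖F xhat‖ with hr_def
  have hr : 0 < r := norm_pos_iff.2 hF0
  have hKtop : Tendsto K atTop atTop := hK.tendsto_atTop
  have hFlimK : Tendsto (fun k => ‖F (x (K k))‖) atTop (nhds r) :=
    ((hFcont.tendsto xhat).comp hKlim).norm
  have hFge : ∀ k, r ≤ ‖F (x k)‖ := by
    intro k
    refine le_of_tendsto hFlimK ?_
    filter_upwards [eventually_ge_atTop k] with j hj
    exact hFanti (hj.trans (hK.id_le j))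
  -- case split on whether the full-step condition holds infinitely often
  set S : Set ℕ := {k | ‖F (x k + d k)‖ ≤ ϑ * ‖F (x k)‖} with hS_def
  by_cases hSinf : S.Infinite
  · -- infinitely many contraction steps
    have key : ∀ j : ℕ, ∃ k, ‖F (x k)‖ ≤ ϑ ^ j * ‖F (x 0)‖ := by
      intro j
      induction j with
      | zero => exact ⟨0, by simp⟩
      | succ j ih =>
        obtain ⟨k, hk⟩ := ih
        have hex : ∃ k', k ≤ k' ∧ k' ∈ S := by
          by_contra h
          push_neg at h
          exact hSinf (Set.Finite.subset (Set.finite_Iio k)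
            (fun j' hj' => lt_of_not_ge fun hle => h j' hle hj'))
        obtain ⟨k', hkk', hk'S⟩ := hex
        have hα1 : α k' = 1 := by
          rcases hα k' with ⟨_, h1⟩ | ⟨hnc, _⟩
          · exact h1
          · exact absurd hk'S hnc
        have hx1 : x (k' + 1) = x k' + d k' := by rw [hstep k', hα1, one_smul]
        refine ⟨k' + 1, ?_⟩
        have h2 : ‖F (x (k' + 1))‖ ≤ ϑ * ‖F (x k')‖ := by rw [hx1]; exact hk'S
        have h3 : ‖F (x k')‖ ≤ ‖F (x k)‖ := hFanti hkk'
        calc ‖F (x (k' + 1))‖ ≤ ϑ * ‖F (x k')‖ := h2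
          _ ≤ ϑ * (ϑ ^ j * ‖F (x 0)‖) := by
              have := h3.trans hk
              nlinarith
          _ = ϑ ^ (j + 1) * ‖F (x 0)‖ := by ring
    have hlim0 : Tendsto (fun j : ℕ => ϑ ^ j * ‖F (x 0)‖) atTop (nhds 0) := by
      simpa using (tendsto_pow_atTop_nhds_zero_of_lt_one hϑ0.le hϑ1).mul_const ‖F (x 0)‖
    have hr0 : r ≤ 0 := by
      refine ge_of_tendsto hlim0 ?_
      filter_upwards with j
      obtain ⟨k, hk⟩ := key j
      exact (hFge k).trans hk
    linarith
  · -- only finitely many full steps: Armijo case eventually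
    have hSfin : S.Finite := Set.not_infinite.mp hSinf
    obtain ⟨N, hN⟩ := hSfin.bddAbove
    have hgx_eq : ∀ y, matCLM (J y)ᵀ (F y) = g y := fun y => rfl
    have hcase2 : ∀ k, N < k → ∃ mk : ℕ, α k = η ^ mk ∧
        φ (x k + η ^ mk • d k) - φ (x k) ≤ ν * η ^ mk * ⟪g (x k), d k⟫ ∧
        ∀ m' : ℕ, m' < mk →
          ¬ (φ (x k + η ^ m' • d k) - φ (x k) ≤ ν * η ^ m' * ⟪g (x k), d k⟫) := by
      intro k hk
      rcases hα k with ⟨hc, _⟩ | ⟨_, mk, hαk, harm, hmin⟩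
      · exact absurd (hN hc) (not_le.2 hk)
      · refine ⟨mk, hαk, ?_, ?_⟩
        · simpa [hφ_def, hgx_eq] using harm
        · intro m' hm'
          have := hmin m' hm'
          simpa [hφ_def, hgx_eq] using this
    -- convergence of φ along the whole sequence
    have hφbdd : BddBelow (Set.range fun k => φ (x k)) := by
      refine ⟨0, ?_⟩
      rintro _ ⟨k, rfl⟩
      simp only [hφ_def]
      positivity
    have hφlim : Tendsto (fun k => φ (x k)) atTop (nhds (⨅ k, φ (x k))) :=
      tendsto_atTop_ciInf hφanti hφbdd
    have hdiffto0 : Tendsto (fun k => φ (x k) - φ (x (k + 1))) atTop (nhds 0) := by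
      have h2 : Tendsto (fun k => φ (x (k + 1))) atTop (nhds (⨅ k, φ (x k))) :=
        hφlim.comp (tendsto_add_atTop_nat 1)
      simpa using hφlim.sub h2
    -- α_k q_k → 0
    have hu_le : ∀ k, N < k → ν * (α k * q k) ≤ φ (x k) - φ (x (k + 1)) := by
      intro k hk
      obtain ⟨mk, hαk, harm, _⟩ := hcase2 k hk
      have hx1 : x (k + 1) = x k + η ^ mk • d k := by rw [hstep k, hαk]
      rw [hx1, hαk]
      have := harm
      rw [hdesc k] at this
      nlinarith [this]
    have hu0 : ∀ k, N < k → 0 ≤ α k * q k := by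
      intro k hk
      obtain ⟨mk, hαk, _, _⟩ := hcase2 k hk
      exact mul_nonneg (by rw [hαk]; positivity) (hqnonneg k)
    have hνu : Tendsto (fun k => ν * (α k * q k)) atTop (nhds 0) := by
      refine tendsto_of_tendsto_of_tendsto_of_le_of_le' tendsto_const_nhds hdiffto0 ?_ ?_
      · filter_upwards [eventually_gt_atTop N] with k hk
        exact mul_nonneg hν0.le (hu0 k hk)
      · filter_upwards [eventually_gt_atTop N] with k hk
        exact hu_le k hk
    have huto0 : Tendsto (fun k => α k * q k) atTop (nhds 0) := by
      have h2 := hνu.const_mul ν⁻¹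
      simpa [inv_mul_cancel_left₀ hν0.ne'] using h2
    have huK : Tendsto (fun k => α (K k) * q (K k)) atTop (nhds 0) := huto0.comp hKtop
    -- limits along the subsequence
    have hgK : Tendsto (fun k => g (x (K k))) atTop (nhds (g xhat)) :=
      (hgcont.tendsto xhat).comp hKlim
    have hgx0 : g xhat ≠ 0 := hg
    have hgpos : 0 < ‖g xhat‖ := norm_pos_iff.2 hgx0
    have hgKn : Tendsto (fun k => ‖g (x (K k))‖) atTop (nhds ‖g xhat‖) := hgK.norm
    -- continuity of the LM matrix map
    set Mf : EuclideanSpace ℝ (Fin n) → (EuclideanSpace ℝ (Fin n) →L[ℝ] EuclideanSpace ℝ (Fin n)) :=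
      fun y => matCLM ((J y)ᵀ * J y + ‖F y‖ ^ 2 • (Lᵀ * L)) with hMf_def
    have hMcont : Continuous Mf := by
      apply continuous_matCLM.comp
      exact (hJcont.matrix_transpose.matrix_mul hJcont).add
        (((hFcont.norm.pow 2)).smul continuous_const)
    have hMK : Tendsto (fun k => ‖Mf (x (K k))‖) atTop (nhds ‖Mf xhat‖) :=
      ((hMcont.tendsto xhat).comp hKlim).norm
    have hgle : ∀ k, ‖g (x k)‖ ≤ ‖Mf (x k)‖ * ‖d k‖ := by
      intro k
      have h1 : Mf (x k) (d k) = -(g (x k)) := by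
        rw [hMf_def, hg_def]
        exact hd k
      have h2 : ‖g (x k)‖ = ‖Mf (x k) (d k)‖ := by rw [h1, norm_neg]
      rw [h2]
      exact (Mf (x k)).le_opNorm (d k)
    -- constants
    set C1 : ℝ := ‖Mf xhat‖ with hC1_def
    have hC1 : 0 ≤ C1 := norm_nonneg _
    set c : ℝ := min 1 (r ^ 2) * γ with hc_def
    have hc : 0 < c := mul_pos (lt_min one_pos (pow_pos hr 2)) hγ
    have hq_ge : ∀ k, c * ‖d k‖ ^ 2 ≤ q k := by
      intro k
      have h1 := hcomp (x k) (d k)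
      have h2 : r ^ 2 ≤ ‖F (x k)‖ ^ 2 := by
        have := hFge k
        nlinarith [hr.le]
      have hmin0 : 0 < min 1 (r ^ 2) := lt_min one_pos (pow_pos hr 2)
      have hm1 : min 1 (r ^ 2) ≤ 1 := min_le_left _ _
      have hm2 : min 1 (r ^ 2) ≤ r ^ 2 := min_le_right _ _
      have ha : (0 : ℝ) ≤ ‖matCLM (J (x k)) (d k)‖ ^ 2 := sq_nonneg _
      have hb : (0 : ℝ) ≤ ‖matCLM L (d k)‖ ^ 2 := sq_nonneg _
      have h3 := mul_le_mul_of_nonneg_left h1 hmin0.le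
      simp only [hq_def, hc_def]
      nlinarith [h3, hm1, hm2, ha, hb, h2]
    set B : ℝ := (‖g xhat‖ + 1) / c with hB_def
    have hB : 0 < B := div_pos (by positivity) hc
    set δ : ℝ := c * (‖g xhat‖ / (2 * (C1 + 1))) ^ 2 with hδ_def
    have hδ : 0 < δ := by
      apply mul_pos hc
      positivity
    -- eventually q (K k) ≥ δ
    have hqδ : ∀ᶠ k in atTop, δ ≤ q (K k) := by
      filter_upwards [hgKn.eventually (eventually_gt_nhds (by linarith : ‖g xhat‖ / 2 < ‖g xhat‖)),
        hMK.eventually (eventually_lt_nhds (by linarith : C1 < C1 + 1))] with k hglow hMup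
      have hd_low : ‖g xhat‖ / (2 * (C1 + 1)) ≤ ‖d (K k)‖ := by
        have h1 := hgle (K k)
        have h2 : 0 < C1 + 1 := by linarith
        have h3 : ‖g (x (K k))‖ ≤ (C1 + 1) * ‖d (K k)‖ := by
          calc ‖g (x (K k))‖ ≤ ‖Mf (x (K k))‖ * ‖d (K k)‖ := h1
            _ ≤ (C1 + 1) * ‖d (K k)‖ :=
              mul_le_mul_of_nonneg_right hMup.le (norm_nonneg _)
        rw [div_le_iff₀ (by positivity)]
        nlinarith [h3, hglow]
      calc δ = c * (‖g xhat‖ / (2 * (C1 + 1))) ^ 2 := rfl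
        _ ≤ c * ‖d (K k)‖ ^ 2 := by
            apply mul_le_mul_of_nonneg_left _ hc.le
            have h0 : 0 ≤ ‖g xhat‖ / (2 * (C1 + 1)) := by positivity
            nlinarith [hd_low]
        _ ≤ q (K k) := hq_ge (K k)
    -- α (K k) → 0
    have hKN : ∀ᶠ k in atTop, N < K k := hKtop.eventually (eventually_gt_atTop N)
    have hαK0 : Tendsto (fun k => α (K k)) atTop (nhds 0) := by
      have hupper : Tendsto (fun k => α (K k) * q (K k) / δ) atTop (nhds 0) := by
        simpa using huK.div_const δ
      refine tendsto_of_tendsto_of_tendsto_of_le_of_le' tendsto_const_nhds hupper ?_ ?_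
      · filter_upwards [hKN] with k hk
        obtain ⟨mk, hαk, _, _⟩ := hcase2 (K k) hk
        rw [hαk]; positivity
      · filter_upwards [hKN, hqδ] with k hk hq
        obtain ⟨mk, hαk, _, _⟩ := hcase2 (K k) hk
        have hαpos : 0 < α (K k) := by rw [hαk]; positivity
        rw [le_div_iff₀ hδ]
        nlinarith [hq, hαpos]
    -- continuity of g at xhat, pick ρ for ε
    set ε : ℝ := (1 - ν) * δ / (4 * B) with hε_def
    have hε : 0 < ε := by
      apply div_pos (mul_pos (by linarith) hδ)
      linarith
    obtain ⟨ρ, hρ0, hρ⟩ := Metric.continuousAt_iff.1 (hgcont.continuousAt (x := xhat)) ε hε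
    -- final contradiction at a large index
    have hfinal : ∀ᶠ k in (atTop : Filter ℕ), False := by
      filter_upwards [hKN, hqδ,
        hKlim (Metric.ball_mem_nhds xhat (by positivity : (0:ℝ) < ρ / 2)),
        hgKn.eventually (eventually_lt_nhds (by linarith : ‖g xhat‖ < ‖g xhat‖ + 1)),
        hgK.eventually (Metric.ball_mem_nhds (g xhat) hε),
        hαK0.eventually (eventually_lt_nhds (by norm_num : (0:ℝ) < 1)),
        hαK0.eventually (eventually_lt_nhds
          (by positivity : (0:ℝ) < η * ρ / (2 * B)))] with k hk hq hxball hgup hgball hα1 hα2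
      set j := K k with hj_def
      obtain ⟨mk, hαk, harm, hmin⟩ := hcase2 j hk
      -- d bound
      have hdB : ‖d j‖ ≤ B := by
        by_contra hcon
        push_neg at hcon
        have hdpos : 0 < ‖d j‖ := hB.trans hcon
        have h1 : q j ≤ ‖g (x j)‖ * ‖d j‖ := by
          have h2 : q j = ⟪-(g (x j)), d j⟫ := by
            rw [inner_neg_left, hdesc j, neg_neg]
          rw [h2]
          calc ⟪-(g (x j)), d j⟫ ≤ ‖-(g (x j))‖ * ‖d j‖ := real_inner_le_norm _ _
            _ = ‖g (x j)‖ * ‖d j‖ := by rw [norm_neg]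
        have h3 := hq_ge j
        have h4 : ‖g (x j)‖ < ‖g xhat‖ + 1 := hgup
        have h5 : B * c = ‖g xhat‖ + 1 := by
          rw [hB_def]; field_simp
        nlinarith [h1, h3, h4, hdpos, hcon, norm_nonneg (g (x j))]
      -- mk ≥ 1
      have hmk0 : mk ≠ 0 := by
        intro h0
        rw [h0, pow_zero] at hαk
        rw [hαk] at hα1
        exact absurd hα1 (lt_irrefl 1)
      obtain ⟨m', rfl⟩ := Nat.exists_eq_succ_of_ne_zero hmk0
      set β : ℝ := η ^ m' with hβ_def
      have hβpos : 0 < β := pow_pos hη0 m'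
      have hβα : β * η = α j := by rw [hαk, hβ_def, pow_succ]
      have hβB : β * B < ρ / 2 := by
        have h1 : β = α j / η := by rw [← hβα]; field_simp
        have h2 : α j < η * ρ / (2 * B) := hα2
        rw [h1, div_mul_eq_mul_div, div_lt_iff₀ hη0]
        calc α j * B < (η * ρ / (2 * B)) * B := by
              apply mul_lt_mul_of_pos_right h2 hB
          _ = ρ / 2 * η := by field_simp
      -- failed Armijo at m'
      have hfail := hmin m' (Nat.lt_succ_self m')
      push_neg at hfail
      -- mean value theorem
      have hder : ∀ t : ℝ, HasDerivAt (fun s : ℝ => φ (x j + s • d j))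
          ⟪g (x j + t • d j), d j⟫ t := by
        intro t
        exact phi_hasDerivAt hdiff (x j) (d j) t
      obtain ⟨t₀, ht₀, hslope⟩ := exists_hasDerivAt_eq_slope
        (fun s : ℝ => φ (x j + s • d j)) (fun t => ⟪g (x j + t • d j), d j⟫) hβpos
        (fun t _ => (hder t).continuousAt.continuousWithinAt)
        (fun t _ => hder t)
      set ξ := x j + t₀ • d j with hξ_def
      have hslope' : ⟪g ξ, d j⟫ * β = φ (x j + β • d j) - φ (x j) := by
        have h := hslope
        simp only [zero_smul, add_zero, sub_zero] at h
        exact (eq_div_iff hβpos.ne').1 h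
      have hgt : ν * β * ⟪g (x j), d j⟫ < φ (x j + β • d j) - φ (x j) := hfail
      have hgt2 : ν * ⟪g (x j), d j⟫ < ⟪g ξ, d j⟫ := by
        nlinarith [hslope', hgt, hβpos]
      -- ξ is close to xhat
      have hξclose : dist ξ xhat < ρ := by
        have h1 : dist (x j) xhat < ρ / 2 := Metric.mem_ball.1 hxball
        have h2 : ‖t₀ • d j‖ ≤ β * B := by
          rw [norm_smul, Real.norm_eq_abs, abs_of_pos ht₀.1]
          exact mul_le_mul ht₀.2.le hdB (norm_nonneg _) hβpos.le
        calc dist ξ xhat ≤ dist ξ (x j) + dist (x j) xhat := dist_triangle _ _ _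
          _ = ‖t₀ • d j‖ + dist (x j) xhat := by
              rw [hξ_def, dist_eq_norm]; simp
          _ < β * B + ρ / 2 := by
              have := h2.trans_lt hβB
              linarith [h1, h2, hβB]
          _ < ρ := by linarith [hβB]
      have hgξ : ‖g ξ - g xhat‖ < ε := by
        have := hρ hξclose
        rwa [dist_eq_norm] at this
      have hgj : ‖g (x j) - g xhat‖ < ε := by
        have := Metric.mem_ball.1 hgball
        rwa [dist_eq_norm] at this
      -- chain of inequalities
      have hqd : q j = -⟪g (x j), d j⟫ := by rw [hdesc j]; ring
      have hchain1 : (1 - ν) * δ ≤ (1 - ν) * q j :=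
        mul_le_mul_of_nonneg_left hq (by linarith)
      have hchain2 : (1 - ν) * q j < ⟪g ξ - g (x j), d j⟫ := by
        rw [inner_sub_left]
        nlinarith [hgt2, hqd]
      have hchain3 : ⟪g ξ - g (x j), d j⟫ ≤ 2 * ε * B := by
        calc ⟪g ξ - g (x j), d j⟫ ≤ ‖g ξ - g (x j)‖ * ‖d j‖ := real_inner_le_norm _ _
          _ ≤ (‖g ξ - g xhat‖ + ‖g xhat - g (x j)‖) * B := by
              apply mul_le_mul (norm_sub_le_norm_sub_add_norm_sub _ _ _) hdB (norm_nonneg _)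
              positivity
          _ ≤ 2 * ε * B := by
              have h1 : ‖g xhat - g (x j)‖ < ε := by
                rw [norm_sub_rev]; exact hgj
              nlinarith [hgξ, h1, hB]
      have hεδ : 2 * ε * B = (1 - ν) * δ / 2 := by
        rw [hε_def]
        field_simp
        ring
      have hpos : 0 < (1 - ν) * δ := mul_pos (by linarith) hδ
      linarith [hchain1, hchain2, hchain3]
    obtain ⟨k, hk⟩ := hfinal.exists
    exact hk
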